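/- The row estimate minus the true sum is at most half the colliding mass: if K = x then (V+C)/2 − S(x) ≤ (V − S(x))/2, and if K ≠ x then (V−C)/2 − S(x) ≤ (V − S(x))/2. -/
import Mathlib


/-- State of a bucket in MV-Sketch: total value `V`, candidate key `K`,
indicator counter `C`. -/
structure Bucket (α : Type*) where
  V : ℝ
  K : α
  C : ℝ

/-- One update of the generalized majority vote algorithm on input `(y, v)`. -/
noncomputable def Bucket.step {α : Type*} [DecidableEq α] (b : Bucket α) (p : α × ℝ) :
    Bucket α :=
  if p.1 = b.K then ⟨b.V + p.2, b.K, b.C + p.2⟩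
  else if b.C - p.2 < 0 then ⟨b.V + p.2, p.1, p.2 - b.C⟩
  else ⟨b.V + p.2, b.K, b.C - p.2⟩

/-- State of the bucket after processing the whole stream `l`, starting from
an arbitrary initial key `k0`, `V = 0`, `C = 0`. -/
noncomputable def runBucket {α : Type*} [DecidableEq α] (k0 : α) (l : List (α × ℝ)) :
    Bucket α :=
  l.foldl Bucket.step ⟨0, k0, 0⟩

/-- Total value of flow `x` in the stream `l`. -/
def flowSum {α : Type*} [DecidableEq α] (x : α) (l : List (α × ℝ)) : ℝ :=
  ((l.filter fun p => p.1 = x).map Prod.snd).sum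

lemma flowSum_cons {α : Type*} [DecidableEq α] (x : α) (p : α × ℝ) (l : List (α × ℝ)) :
    flowSum x (p :: l) = (if p.1 = x then p.2 else 0) + flowSum x l := by
  by_cases h : p.1 = x <;> simp [flowSum, List.filter_cons, h]

lemma flowSum_nonneg {α : Type*} [DecidableEq α] (x : α) (l : List (α × ℝ))
    (hv : ∀ p ∈ l, 0 ≤ p.2) : 0 ≤ flowSum x l := by
  induction l with
  | nil => simp [flowSum]
  | cons p l ih =>
    rw [flowSum_cons]
    have h1 := hv p (by simp)
    have h2 := ih (fun q hq => hv q (by simp [hq]))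
    split <;> linarith

lemma aux_inv {α : Type*} [DecidableEq α] (x : α) :
    ∀ (l : List (α × ℝ)) (b : Bucket α) (c : ℝ), (∀ p ∈ l, 0 ≤ p.2) →
      0 ≤ b.C → 0 ≤ c → (b.K = x → b.C ≤ c) →
      0 ≤ (l.foldl Bucket.step b).C ∧
        ((l.foldl Bucket.step b).K = x → (l.foldl Bucket.step b).C ≤ c + flowSum x l) := by
  intro l
  induction l with
  | nil => intro b c _ h1 _ h3; simpa [flowSum] using ⟨h1, h3⟩
  | cons p l ih =>
    intro b c hv h1 h2 h3
    have hp : 0 ≤ p.2 := hv p (by simp)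
    have hv' : ∀ q ∈ l, 0 ≤ q.2 := fun q hq => hv q (by simp [hq])
    rw [List.foldl_cons, flowSum_cons]
    by_cases hk : p.1 = b.K
    · have hstep : Bucket.step b p = ⟨b.V + p.2, b.K, b.C + p.2⟩ := by
        simp [Bucket.step, hk]
      rw [hstep]
      by_cases hx : b.K = x
      · have := ih ⟨b.V + p.2, b.K, b.C + p.2⟩ (c + p.2) hv' (by simp; linarith)
          (by linarith) (fun _ => by simp; linarith [h3 hx])
        rw [if_pos (hk.trans hx)]
        exact ⟨this.1, fun h => by linarith [this.2 h]⟩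
      · have := ih ⟨b.V + p.2, b.K, b.C + p.2⟩ c hv' (by simp; linarith) h2
          (fun h => absurd h hx)
        rw [if_neg (fun h => hx ((hk.symm.trans h)))]
        exact ⟨this.1, fun h => by linarith [this.2 h]⟩
    · by_cases hneg : b.C - p.2 < 0
      · have hstep : Bucket.step b p = ⟨b.V + p.2, p.1, p.2 - b.C⟩ := by
          simp [Bucket.step, hk, hneg]
        rw [hstep]
        by_cases hx : p.1 = x
        · have := ih ⟨b.V + p.2, p.1, p.2 - b.C⟩ (c + p.2) hv' (by simp; linarith)
            (by linarith) (fun _ => by simp; linarith)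
          rw [if_pos hx]
          exact ⟨this.1, fun h => by linarith [this.2 h]⟩
        · have := ih ⟨b.V + p.2, p.1, p.2 - b.C⟩ c hv' (by simp; linarith) h2
            (fun h => absurd h hx)
          rw [if_neg hx]
          exact ⟨this.1, fun h => by linarith [this.2 h]⟩
      · have hstep : Bucket.step b p = ⟨b.V + p.2, b.K, b.C - p.2⟩ := by
          simp [Bucket.step, hk, hneg]
        rw [hstep]
        by_cases hx : b.K = x
        · have := ih ⟨b.V + p.2, b.K, b.C - p.2⟩ c hv' (by simp; linarith) h2
            (fun _ => by simp; linarith [h3 hx])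
          rw [if_neg (fun h => hk (h.trans hx.symm))]
          exact ⟨this.1, fun h => by linarith [this.2 h]⟩
        · have := ih ⟨b.V + p.2, b.K, b.C - p.2⟩ c hv' (by simp; linarith) h2
            (fun h => absurd h hx)
          split
          · exact ⟨this.1, fun h => by linarith [this.2 h]⟩
          · exact ⟨this.1, fun h => by linarith [this.2 h]⟩

/-- The row estimate minus the true sum is at most half the colliding mass:
if `K = x` then `(V+C)/2 - S(x) ≤ (V - S(x))/2`, and if `K ≠ x` then
`(V-C)/2 - S(x) ≤ (V - S(x))/2`. -/
theorem row_estimate_error_le_half_colliding_mass {α : Type*} [DecidableEq α]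
    (k0 x : α) (l : List (α × ℝ)) (hv : ∀ p ∈ l, 0 ≤ p.2) :
    ((runBucket k0 l).K = x →
      ((runBucket k0 l).V + (runBucket k0 l).C) / 2 - flowSum x l ≤
        ((runBucket k0 l).V - flowSum x l) / 2) ∧
    ((runBucket k0 l).K ≠ x →
      ((runBucket k0 l).V - (runBucket k0 l).C) / 2 - flowSum x l ≤
        ((runBucket k0 l).V - flowSum x l) / 2) := by
  have h := aux_inv x l ⟨0, k0, 0⟩ 0 hv le_rfl le_rfl (fun _ => le_rfl)
  have hS := flowSum_nonneg x l hv
  unfold runBucket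
  constructor
  · intro hK; have := h.2 hK; linarith
  · intro _; linarith [h.1]
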